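/- arXiv:2401.07122 — 3 statements merged into one kernel-verified Lean document; each statement's English description precedes it below -/
import Mathlib

section
/- Let S_1, …, S_n be subsets of ℝ^m and let z be a point of the convex hull of the Minkowski sum S_1 + ⋯ + S_n. Then there exist points z_1, …, z_n with z_i in the convex hull of S_i for every i, such that z = z_1 + ⋯ + z_n and z_i ∈ S_i for all but at most m indices i (i.e., the set {i : z_i ∉ S_i} has cardinality at most m). -/
open Finset

namespace SFAux

lemma rep_exists {m n : ℕ} (S : Fin n → Set (EuclideanSpace ℝ (Fin m))) (z : EuclideanSpace ℝ (Fin m))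
    (hz : z ∈ convexHull ℝ
      {x : EuclideanSpace ℝ (Fin m) |
        ∃ f : Fin n → EuclideanSpace ℝ (Fin m), (∀ i, f i ∈ S i) ∧ x = ∑ i, f i}) :
    ∃ (t : Fin n → Finset (EuclideanSpace ℝ (Fin m)))
      (w : Fin n → EuclideanSpace ℝ (Fin m) → ℝ),
      (∀ i, ↑(t i) ⊆ S i) ∧ (∀ i, ∀ x ∈ t i, 0 ≤ w i x) ∧ (∀ i, ∑ x ∈ t i, w i x = 1) ∧
        ∑ i, ∑ x ∈ t i, w i x • x = z := by
  -- first: z is a sum of points of the convex hulls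
  have h1 : z ∈ {x : EuclideanSpace ℝ (Fin m) |
      ∃ f : Fin n → EuclideanSpace ℝ (Fin m), (∀ i, f i ∈ convexHull ℝ (S i)) ∧ x = ∑ i, f i} := by
    refine convexHull_min ?_ ?_ hz
    · rintro x ⟨f, hf, rfl⟩
      exact ⟨f, fun i => subset_convexHull ℝ _ (hf i), rfl⟩
    · rintro x ⟨f, hf, rfl⟩ y ⟨g, hg, rfl⟩ a b ha hb hab
      refine ⟨fun i => a • f i + b • g i,
        fun i => (convex_convexHull ℝ (S i)) (hf i) (hg i) ha hb hab, ?_⟩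
      rw [Finset.smul_sum, Finset.smul_sum, ← Finset.sum_add_distrib]
  obtain ⟨f, hf, rfl⟩ := h1
  have h2 : ∀ i, ∃ (t : Finset (EuclideanSpace ℝ (Fin m))) (w : EuclideanSpace ℝ (Fin m) → ℝ),
      ↑t ⊆ S i ∧ (∀ x ∈ t, 0 ≤ w x) ∧ ∑ x ∈ t, w x = 1 ∧ ∑ x ∈ t, w x • x = f i := by
    intro i
    have := hf i
    rw [convexHull_eq_union_convexHull_finite_subsets] at this
    simp only [Set.mem_iUnion] at this
    obtain ⟨t, ht, hmem⟩ := this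
    rw [Finset.mem_convexHull'] at hmem
    obtain ⟨w, hw0, hw1, hws⟩ := hmem
    exact ⟨t, w, ht, hw0, hw1, hws⟩
  choose t w ht hw0 hw1 hws using h2
  exact ⟨t, w, ht, hw0, hw1, by rw [Finset.sum_congr rfl fun i _ => hws i]⟩


lemma reduce {m n : ℕ} (S : Fin n → Set (EuclideanSpace ℝ (Fin m))) (z : EuclideanSpace ℝ (Fin m))
    (t : Fin n → Finset (EuclideanSpace ℝ (Fin m)))
    (w : Fin n → EuclideanSpace ℝ (Fin m) → ℝ)
    (ht : ∀ i, ↑(t i) ⊆ S i) (hw0 : ∀ i, ∀ x ∈ t i, 0 ≤ w i x)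
    (hw1 : ∀ i, ∑ x ∈ t i, w i x = 1) (hws : ∑ i, ∑ x ∈ t i, w i x • x = z)
    (hN : m + n < ∑ i, (t i).card) :
    ∃ (t' : Fin n → Finset (EuclideanSpace ℝ (Fin m)))
      (w' : Fin n → EuclideanSpace ℝ (Fin m) → ℝ), (∀ i, ↑(t' i) ⊆ S i) ∧ (∀ i, ∀ x ∈ t' i, 0 ≤ w' i x) ∧
      (∀ i, ∑ x ∈ t' i, w' i x = 1) ∧ ∑ i, ∑ x ∈ t' i, w' i x • x = z ∧
      ∑ i, (t' i).card < ∑ i, (t i).card := by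
  classical
  have hrank : Module.finrank ℝ (EuclideanSpace ℝ (Fin m) × (Fin n → ℝ)) = m + n := by
    rw [Module.finrank_prod, finrank_euclideanSpace_fin, Module.finrank_pi,
      Fintype.card_fin]
  set ι := Σ i : Fin n, ↥(t i) with hι
  have hcard : Fintype.card ι = ∑ i, (t i).card := by
    simp [hι, Fintype.card_sigma]
  set v : ι → EuclideanSpace ℝ (Fin m) × (Fin n → ℝ) := fun j => ((j.2 : EuclideanSpace ℝ (Fin m)), Pi.single j.1 1) with hv
  have hdep : ¬ LinearIndependent ℝ v := by
    intro h
    have := h.fintype_card_le_finrank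
    rw [hcard, hrank] at this
    omega
  obtain ⟨g, hg0, j₁, hj₁⟩ := Fintype.not_linearIndependent_iff.mp hdep
  set c : Fin n → EuclideanSpace ℝ (Fin m) → ℝ :=
    fun i x => if hx : x ∈ t i then g ⟨i, ⟨x, hx⟩⟩ else 0 with hcdef
  have hcx : ∀ (i : Fin n) (x : ↥(t i)), c i ↑x = g ⟨i, x⟩ := fun i x => dif_pos x.2
  -- the two components of the linear relation
  have hBg : ∀ i, ∑ x ∈ (t i).attach, g ⟨i, x⟩ = 0 := by
    intro i
    have h2 : ∑ j : ι, g j * (Pi.single j.1 1 : Fin n → ℝ) i = 0 := by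
      have h := congrArg (fun p : EuclideanSpace ℝ (Fin m) × (Fin n → ℝ) => p.2 i) hg0
      simpa [Prod.snd_sum, Finset.sum_apply, hv] using h
    rw [← Finset.univ_sigma_univ, Finset.sum_sigma] at h2
    simp only [Pi.single_apply, mul_ite, mul_one, mul_zero] at h2
    have h3 : ∀ i' : Fin n, ∑ x : ↥(t i'), (if i = i' then g ⟨i', x⟩ else 0)
        = if i = i' then ∑ x ∈ (t i').attach, g ⟨i', x⟩ else 0 := by
      intro i'; split <;> simp [Finset.univ_eq_attach]
    rw [Finset.sum_congr rfl fun i' _ => h3 i', Finset.sum_ite_eq, if_pos (mem_univ i)] at h2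
    exact h2
  have hB : ∀ i, ∑ x ∈ t i, c i x = 0 := by
    intro i
    rw [← Finset.sum_attach (t i) (fun x => c i x)]
    rw [Finset.sum_congr rfl fun x _ => hcx i x]
    exact hBg i
  have hA : ∑ i, ∑ x ∈ t i, c i x • x = 0 := by
    have h1 : ∑ j : ι, g j • ((j.2 : EuclideanSpace ℝ (Fin m))) = 0 := by
      have h := congrArg Prod.fst hg0
      simpa [Prod.fst_sum, hv] using h
    rw [← Finset.univ_sigma_univ, Finset.sum_sigma] at h1
    rw [← h1]
    refine Finset.sum_congr rfl fun i _ => ?_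
    rw [← Finset.sum_attach (t i) (fun x => c i x • x),
      Finset.sum_congr rfl fun x _ => by rw [hcx i x], Finset.univ_eq_attach]
  -- there is a positive coefficient
  have hpos : ∃ j : ι, 0 < g j := by
    by_contra hcon
    push_neg at hcon
    have h0 : g j₁ < 0 := lt_of_le_of_ne (hcon j₁) hj₁
    have hlt : ∑ x ∈ (t j₁.1).attach, g ⟨j₁.1, x⟩ < ∑ _x ∈ (t j₁.1).attach, (0:ℝ) :=
      Finset.sum_lt_sum (fun x _ => hcon ⟨j₁.1, x⟩) ⟨j₁.2, Finset.mem_attach _ _, h0⟩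
    rw [hBg j₁.1, Finset.sum_const, smul_zero] at hlt
    exact lt_irrefl _ hlt
  have hne : (univ.filter fun j : ι => 0 < g j).Nonempty := by
    obtain ⟨j, hj⟩ := hpos
    exact ⟨j, Finset.mem_filter.mpr ⟨mem_univ _, hj⟩⟩
  obtain ⟨j₀, hj₀, hmin⟩ := Finset.exists_min_image _ (fun j : ι => w j.1 ↑j.2 / g j) hne
  have hgj₀ : 0 < g j₀ := (Finset.mem_filter.mp hj₀).2
  set τ : ℝ := w j₀.1 ↑j₀.2 / g j₀ with hτ
  have hτ0 : 0 ≤ τ := div_nonneg (hw0 _ _ j₀.2.2) hgj₀.le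
  have hkey : ∀ j : ι, 0 ≤ w j.1 ↑j.2 - τ * g j := by
    intro j
    rcases le_or_gt (g j) 0 with h | h
    · have h1 : τ * g j ≤ 0 := mul_nonpos_of_nonneg_of_nonpos hτ0 h
      have h2 := hw0 j.1 ↑j.2 j.2.2
      linarith
    · have h1 := hmin j (Finset.mem_filter.mpr ⟨mem_univ _, h⟩)
      have h2 := (le_div_iff₀ h).mp h1
      linarith
  set w' : Fin n → EuclideanSpace ℝ (Fin m) → ℝ := fun i x => w i x - τ * c i x with hw'
  set t' := Function.update t j₀.1 ((t j₀.1).erase ↑j₀.2) with ht'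
  have ht'sub : ∀ i, t' i ⊆ t i := by
    intro i; rw [ht']
    rcases eq_or_ne i j₀.1 with rfl | hne'
    · rw [Function.update_self]; exact Finset.erase_subset _ _
    · rw [Function.update_of_ne hne']
  have hw'0 : ∀ i, ∀ x ∈ t i, 0 ≤ w' i x := by
    intro i x hx
    have h1 := hkey ⟨i, ⟨x, hx⟩⟩
    have h2 : c i x = g ⟨i, ⟨x, hx⟩⟩ := dif_pos hx
    rw [hw']; dsimp only; rw [h2]; exact h1
  have hzero : w' j₀.1 ↑j₀.2 = 0 := by
    rw [hw']; dsimp only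
    rw [hcx j₀.1 j₀.2, hτ, div_mul_cancel₀ _ hgj₀.ne', sub_self]
  have hw'sum : ∀ i, ∑ x ∈ t i, w' i x = 1 := by
    intro i
    rw [hw']; dsimp only
    rw [Finset.sum_sub_distrib, hw1 i, ← Finset.mul_sum, hB i, mul_zero, sub_zero]
  have hw'vec : ∑ i, ∑ x ∈ t i, w' i x • x = z := by
    have e1 : ∀ i, ∑ x ∈ t i, w' i x • x
        = (∑ x ∈ t i, w i x • x) - τ • ∑ x ∈ t i, c i x • x := by
      intro i
      rw [Finset.smul_sum, ← Finset.sum_sub_distrib]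
      refine Finset.sum_congr rfl fun x _ => ?_
      rw [hw']; dsimp only
      rw [sub_smul, mul_smul]
    rw [Finset.sum_congr rfl fun i _ => e1 i, Finset.sum_sub_distrib, ← Finset.smul_sum, hA,
      smul_zero, sub_zero, hws]
  refine ⟨t', w', ?_, ?_, ?_, ?_, ?_⟩
  · intro i; exact (Finset.coe_subset.mpr (ht'sub i)).trans (ht i)
  · intro i x hx; exact hw'0 i x (ht'sub i hx)
  · intro i
    rcases eq_or_ne i j₀.1 with rfl | hne'
    · rw [ht', Function.update_self, Finset.sum_erase_eq_sub j₀.2.2, hw'sum, hzero, sub_zero]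
    · rw [ht', Function.update_of_ne hne', hw'sum]
  · rw [← hw'vec]
    refine Finset.sum_congr rfl fun i _ => ?_
    rcases eq_or_ne i j₀.1 with rfl | hne'
    · rw [ht', Function.update_self, Finset.sum_erase_eq_sub j₀.2.2, hzero, zero_smul, sub_zero]
    · rw [ht', Function.update_of_ne hne']
  · refine Finset.sum_lt_sum (fun i _ => Finset.card_le_card (ht'sub i)) ⟨j₀.1, mem_univ _, ?_⟩
    rw [ht', Function.update_self]
    exact Finset.card_erase_lt_of_mem j₀.2.2


end SFAux

/-- **The Shapley–Folkman lemma.**  Let `S 1, …, S n` be subsets of `ℝ^m` and let `z` be a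
point of the convex hull of the Minkowski sum `S 1 + ⋯ + S n`.  Then there exist points
`zi 1, …, zi n` with `zi i` in the convex hull of `S i` for every `i`, such that
`z = zi 1 + ⋯ + zi n` and `zi i ∈ S i` for all but at most `m` indices `i`. -/
theorem shapley_folkman (m n : ℕ) (S : Fin n → Set (EuclideanSpace ℝ (Fin m)))
    (z : EuclideanSpace ℝ (Fin m))
    (hz : z ∈ convexHull ℝ
      {x : EuclideanSpace ℝ (Fin m) |
        ∃ f : Fin n → EuclideanSpace ℝ (Fin m), (∀ i, f i ∈ S i) ∧ x = ∑ i, f i}) :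
    ∃ zi : Fin n → EuclideanSpace ℝ (Fin m),
      (∀ i, zi i ∈ convexHull ℝ (S i)) ∧ z = ∑ i, zi i ∧
      {i : Fin n | zi i ∉ S i}.ncard ≤ m := by
  classical
  set A : Set ℕ := {N | ∃ (t : Fin n → Finset (EuclideanSpace ℝ (Fin m)))
      (w : Fin n → EuclideanSpace ℝ (Fin m) → ℝ),
      (∀ i, ↑(t i) ⊆ S i) ∧ (∀ i, ∀ x ∈ t i, 0 ≤ w i x) ∧ (∀ i, ∑ x ∈ t i, w i x = 1) ∧
        (∑ i, ∑ x ∈ t i, w i x • x = z) ∧ ∑ i, (t i).card = N} with hA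
  have hAne : A.Nonempty := by
    obtain ⟨t, w, h1, h2, h3, h4⟩ := SFAux.rep_exists S z hz
    exact ⟨_, t, w, h1, h2, h3, h4, rfl⟩
  obtain ⟨t, w, ht, hw0, hw1, hws, hNcard⟩ := Nat.sInf_mem hAne
  -- minimality gives the cardinality bound
  have hle : ∑ i, (t i).card ≤ m + n := by
    by_contra hcon
    push_neg at hcon
    obtain ⟨t', w', h1, h2, h3, h4, h5⟩ := SFAux.reduce S z t w ht hw0 hw1 hws hcon
    have : (∑ i, (t' i).card) ∈ A := ⟨t', w', h1, h2, h3, h4, rfl⟩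
    have := Nat.sInf_le this
    omega
  -- each t i is nonempty
  have htne : ∀ i, (t i).Nonempty := by
    intro i
    rw [Finset.nonempty_iff_ne_empty]
    intro h
    have := hw1 i
    rw [h, Finset.sum_empty] at this
    exact one_ne_zero this.symm
  set zi : Fin n → EuclideanSpace ℝ (Fin m) := fun i => ∑ x ∈ t i, w i x • x with hzi
  have hmem : ∀ i, zi i ∈ convexHull ℝ (S i) := by
    intro i
    have h := Finset.centerMass_mem_convexHull (t i) (hw0 i)
      (by rw [hw1 i]; exact zero_lt_one) (fun x hx => ht i hx)
    rwa [Finset.centerMass_eq_of_sum_1 _ (fun x => x) (hw1 i)] at h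
  -- indices with a singleton support give points of S i
  have hsingle : ∀ i, (t i).card = 1 → zi i ∈ S i := by
    intro i hcard
    obtain ⟨x, hx⟩ := Finset.card_eq_one.mp hcard
    have hx1 : w i x = 1 := by
      have := hw1 i; rwa [hx, Finset.sum_singleton] at this
    have : zi i = x := by rw [hzi]; dsimp only; rw [hx, Finset.sum_singleton, hx1, one_smul]
    rw [this]
    exact ht i (by rw [hx]; exact Finset.mem_singleton_self x)
  set B : Finset (Fin n) := univ.filter (fun i => 2 ≤ (t i).card) with hB
  have hcardB : n + B.card ≤ ∑ i, (t i).card := by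
    have h1 : ∀ i : Fin n, 1 + (if 2 ≤ (t i).card then 1 else 0) ≤ (t i).card := by
      intro i
      have := Finset.card_pos.mpr (htne i)
      split <;> omega
    calc n + B.card = ∑ i : Fin n, (1 + if 2 ≤ (t i).card then 1 else 0) := by
          rw [Finset.sum_add_distrib, Finset.sum_const, smul_eq_mul, mul_one, card_univ,
            Fintype.card_fin, hB, Finset.card_filter]
      _ ≤ ∑ i, (t i).card := Finset.sum_le_sum fun i _ => h1 i
  have hBm : B.card ≤ m := by omega
  refine ⟨zi, hmem, hws.symm, ?_⟩
  have hsub : {i : Fin n | zi i ∉ S i} ⊆ ↑B := by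
    intro i hi
    simp only [Set.mem_setOf_eq] at hi
    simp only [hB, Finset.coe_filter, Set.mem_setOf_eq, mem_univ, true_and]
    by_contra h
    push_neg at h
    have h1 := Finset.card_pos.mpr (htne i)
    have hc : (t i).card = 1 := by omega
    exact hi (hsingle i hc)
  calc {i : Fin n | zi i ∉ S i}.ncard ≤ (↑B : Set (Fin n)).ncard :=
        Set.ncard_le_ncard hsub (Finset.finite_toSet B)
    _ = B.card := Set.ncard_coe_finset B
    _ ≤ m := hBm
end

section
/- In the decentralized FL iteration setting (no loss-function assumptions needed), for every node i and every t ≥ 0 the deviation between the global average and the delayed local aggregate satisfies ‖w(t) − v_i(t)‖² ≤ η² Γ Σ_{τ=max(t−Γ,0)}^{t−1} ‖g(τ)‖², where ‖g(τ)‖² = Σ_{j=1}^{I} ‖s_j(τ)‖². -/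
open scoped BigOperators RealInnerProductSpace
open Filter

noncomputable section

/-- Locally aggregated (delayed) parameter `v_i(t) = Σ_j α_j w_j(τ_{i,j}(t))`. -/
noncomputable def vAgg (d I : ℕ) (α : Fin I → ℝ)
    (w : Fin I → ℕ → EuclideanSpace ℝ (Fin d))
    (τ : Fin I → Fin I → ℕ → ℕ) (i : Fin I) (t : ℕ) : EuclideanSpace ℝ (Fin d) :=
  ∑ j, α j • w j (τ i j t)

/-- Global aggregated parameter `w(t) = Σ_i α_i w_i(t)`. -/
noncomputable def wAgg (d I : ℕ) (α : Fin I → ℝ)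
    (w : Fin I → ℕ → EuclideanSpace ℝ (Fin d)) (t : ℕ) : EuclideanSpace ℝ (Fin d) :=
  ∑ i, α i • w i t

/-- Global loss `F̄(x) = Σ_i α_i F_i(x)`. -/
noncomputable def Fbar (d I : ℕ) (α : Fin I → ℝ)
    (F : Fin I → EuclideanSpace ℝ (Fin d) → ℝ) (x : EuclideanSpace ℝ (Fin d)) : ℝ :=
  ∑ i, α i * F i x

/-- Squared norm of the stacked global gradient: `‖g(t)‖² = Σ_i ‖s_i(t)‖²`. -/
noncomputable def gSq (d I : ℕ) (s : Fin I → ℕ → EuclideanSpace ℝ (Fin d)) (t : ℕ) : ℝ :=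
  ∑ i, ‖s i t‖ ^ 2

/-- **Deviation bound** (inequality (B.4) of the paper): in the decentralized FL
iteration setting, for every node `i` and every `t ≥ 0`,
`‖w(t) − v_i(t)‖² ≤ η² Γ Σ_{τ=max(t−Γ,0)}^{t−1} ‖g(τ)‖²`. -/
theorem deviation_bound (d I : ℕ) (hI : 1 ≤ I)
    (α : Fin I → ℝ) (hα : ∀ i, 0 ≤ α i) (hαs : ∑ i, α i = 1)
    (w s : Fin I → ℕ → EuclideanSpace ℝ (Fin d))
    (η : ℝ) (hη : 0 < η)
    (τ : Fin I → Fin I → ℕ → ℕ) (Γ : ℕ) (hΓ : 1 ≤ Γ)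
    -- gradient-descent update rule
    (hupd : ∀ i t, w i (t + 1) = w i t + η • s i t)
    -- Assumption 1 (bounded delays)
    (hτ1 : ∀ i j t, t - Γ ≤ τ i j t) (hτ2 : ∀ i j t, τ i j t ≤ t)
    (hτd : ∀ i t, τ i i t = t)
    (i : Fin I) (t : ℕ) :
    ‖wAgg d I α w t - vAgg d I α w τ i t‖ ^ 2 ≤
      η ^ 2 * (Γ : ℝ) * ∑ τ' ∈ Finset.Ico (t - Γ) t, gSq d I s τ' := by
  classical
  -- telescoping
  have tel : ∀ j a b, a ≤ b → w j b = w j a + η • ∑ τ' ∈ Finset.Ico a b, s j τ' := by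
    intro j a b hab
    induction b, hab using Nat.le_induction with
    | base => simp
    | succ n hn ih =>
      rw [hupd j n, ih, Finset.sum_Ico_succ_top hn, smul_add, add_assoc]
  set x : Fin I → EuclideanSpace ℝ (Fin d) :=
    fun j => η • ∑ τ' ∈ Finset.Ico (τ i j t) t, s j τ' with hx
  have key : wAgg d I α w t - vAgg d I α w τ i t = ∑ j, α j • x j := by
    unfold wAgg vAgg
    rw [← Finset.sum_sub_distrib]
    refine Finset.sum_congr rfl fun j _ => ?_
    rw [← smul_sub, hx]
    congr 1
    rw [tel j (τ i j t) t (hτ2 i j t)]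
    abel
  rw [key]
  -- Jensen step
  have step1 : ‖∑ j, α j • x j‖ ^ 2 ≤ ∑ j, α j * ‖x j‖ ^ 2 := by
    have h1 : ‖∑ j, α j • x j‖ ≤ ∑ j, α j * ‖x j‖ := by
      refine (norm_sum_le _ _).trans ?_
      refine Finset.sum_le_sum fun j _ => ?_
      rw [norm_smul, Real.norm_eq_abs, abs_of_nonneg (hα j)]
    have h2 : (∑ j, α j * ‖x j‖) ^ 2 ≤ ∑ j, α j * ‖x j‖ ^ 2 := by
      have := Finset.sum_mul_sq_le_sq_mul_sq Finset.univ
        (fun j => Real.sqrt (α j)) (fun j => Real.sqrt (α j) * ‖x j‖)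
      have e1 : ∀ j : Fin I, Real.sqrt (α j) * (Real.sqrt (α j) * ‖x j‖) = α j * ‖x j‖ := by
        intro j; rw [← mul_assoc, Real.mul_self_sqrt (hα j)]
      have e2 : ∀ j : Fin I, Real.sqrt (α j) ^ 2 = α j := fun j => Real.sq_sqrt (hα j)
      have e3 : ∀ j : Fin I, (Real.sqrt (α j) * ‖x j‖) ^ 2 = α j * ‖x j‖ ^ 2 := by
        intro j; rw [mul_pow, e2]
      simp only [e1, e2, e3, hαs, one_mul] at this
      exact this
    calc ‖∑ j, α j • x j‖ ^ 2 ≤ (∑ j, α j * ‖x j‖) ^ 2 := by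
          apply pow_le_pow_left₀ (norm_nonneg _) h1
      _ ≤ _ := h2
  refine step1.trans ?_
  -- bound each ‖x j‖²
  have step2 : ∀ j, ‖x j‖ ^ 2 ≤ η ^ 2 * (Γ : ℝ) * ∑ τ' ∈ Finset.Ico (t - Γ) t, ‖s j τ'‖ ^ 2 := by
    intro j
    rw [hx, norm_smul, Real.norm_eq_abs, abs_of_pos hη, mul_pow]
    have hsub : Finset.Ico (τ i j t) t ⊆ Finset.Ico (t - Γ) t := by
      apply Finset.Ico_subset_Ico (hτ1 i j t) le_rfl
    have hcard : ((Finset.Ico (τ i j t) t).card : ℝ) ≤ (Γ : ℝ) := by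
      rw [Nat.card_Ico]
      have := hτ1 i j t
      exact_mod_cast (by omega : t - τ i j t ≤ Γ)
    have hn : ‖∑ τ' ∈ Finset.Ico (τ i j t) t, s j τ'‖ ^ 2 ≤
        ((Finset.Ico (τ i j t) t).card : ℝ) * ∑ τ' ∈ Finset.Ico (τ i j t) t, ‖s j τ'‖ ^ 2 := by
      calc ‖∑ τ' ∈ Finset.Ico (τ i j t) t, s j τ'‖ ^ 2
          ≤ (∑ τ' ∈ Finset.Ico (τ i j t) t, ‖s j τ'‖) ^ 2 :=
            pow_le_pow_left₀ (norm_nonneg _) (norm_sum_le _ _) 2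
        _ ≤ _ := sq_sum_le_card_mul_sum_sq
    have hext : ∑ τ' ∈ Finset.Ico (τ i j t) t, ‖s j τ'‖ ^ 2 ≤
        ∑ τ' ∈ Finset.Ico (t - Γ) t, ‖s j τ'‖ ^ 2 :=
      Finset.sum_le_sum_of_subset_of_nonneg hsub (fun _ _ _ => sq_nonneg _)
    calc η ^ 2 * ‖∑ τ' ∈ Finset.Ico (τ i j t) t, s j τ'‖ ^ 2
        ≤ η ^ 2 * (((Finset.Ico (τ i j t) t).card : ℝ) *
            ∑ τ' ∈ Finset.Ico (τ i j t) t, ‖s j τ'‖ ^ 2) := by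
          apply mul_le_mul_of_nonneg_left hn (sq_nonneg _)
      _ ≤ η ^ 2 * ((Γ : ℝ) * ∑ τ' ∈ Finset.Ico (t - Γ) t, ‖s j τ'‖ ^ 2) := by
          apply mul_le_mul_of_nonneg_left ?_ (sq_nonneg _)
          apply mul_le_mul hcard hext (Finset.sum_nonneg fun _ _ => sq_nonneg _) (by positivity)
      _ = η ^ 2 * (Γ : ℝ) * ∑ τ' ∈ Finset.Ico (t - Γ) t, ‖s j τ'‖ ^ 2 := by ring
  calc ∑ j, α j * ‖x j‖ ^ 2
      ≤ ∑ j, α j * (η ^ 2 * (Γ : ℝ) * ∑ τ' ∈ Finset.Ico (t - Γ) t, ‖s j τ'‖ ^ 2) :=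
        Finset.sum_le_sum fun j _ => mul_le_mul_of_nonneg_left (step2 j) (hα j)
    _ ≤ ∑ j, (η ^ 2 * (Γ : ℝ) * ∑ τ' ∈ Finset.Ico (t - Γ) t, ‖s j τ'‖ ^ 2) := by
        refine Finset.sum_le_sum fun j _ => ?_
        have hαle : α j ≤ 1 := by
          calc α j ≤ ∑ k, α k := Finset.single_le_sum (fun k _ => hα k) (Finset.mem_univ j)
            _ = 1 := hαs
        have hC : (0:ℝ) ≤ η ^ 2 * (Γ : ℝ) * ∑ τ' ∈ Finset.Ico (t - Γ) t, ‖s j τ'‖ ^ 2 :=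
          mul_nonneg (mul_nonneg (sq_nonneg _) (Nat.cast_nonneg _))
            (Finset.sum_nonneg fun _ _ => sq_nonneg _)
        calc α j * _ ≤ 1 * (η ^ 2 * (Γ : ℝ) * ∑ τ' ∈ Finset.Ico (t - Γ) t, ‖s j τ'‖ ^ 2) :=
              mul_le_mul_of_nonneg_right hαle hC
          _ = _ := one_mul _
    _ = η ^ 2 * (Γ : ℝ) * ∑ τ' ∈ Finset.Ico (t - Γ) t, gSq d I s τ' := by
        unfold gSq
        simp_rw [Finset.mul_sum]
        rw [Finset.sum_comm]
end
end

section
/- Let S be a nonempty finite set (of scheduled nodes), let R_i > 0 for every i ∈ S, and let B > 0 (total bandwidth). Define B_i* = (B / R_i) · (Σ_{i′∈S} 1/R_{i′})⁻¹ for i ∈ S. Then: (1) B_i* > 0 for every i and Σ_{i∈S} B_i* = B; (2) B_i* R_i = B · (Σ_{i′∈S} 1/R_{i′})⁻¹ for every i; and (3) for every allocation (B_i)_{i∈S} with B_i ≥ 0 and Σ_{i∈S} B_i ≤ B, one has min_{i∈S} B_i R_i ≤ min_{i∈S} B_i* R_i = B · (Σ_{i′∈S} 1/R_{i′})⁻¹;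 that is, (B_i*)_{i∈S} maximizes the minimum rate min_{i∈S} B_i R_i subject to the total-bandwidth constraint. -/
open scoped BigOperators

/-- **Proposition 1 of the paper (optimal bandwidth allocation).**  Let `S` be a nonempty
finite set of scheduled nodes, `R i > 0` the per-unit-bandwidth rate of node `i ∈ S`, and
`B > 0` the total bandwidth.  Define `B* i = (B / R i) (Σ_{i'∈S} 1/R i')⁻¹`.  Then:
(1) `B* i > 0` for every `i ∈ S` and `Σ_{i∈S} B* i = B`;
(2) `B* i * R i = B (Σ_{i'∈S} 1/R i')⁻¹` for every `i ∈ S`;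
(3) for every allocation `(B i)_{i∈S}` with `B i ≥ 0` and `Σ_{i∈S} B i ≤ B`, one has
`min_{i∈S} B i * R i ≤ min_{i∈S} B* i * R i = B (Σ_{i'∈S} 1/R i')⁻¹`; i.e. `B*` maximizes
the minimum rate subject to the total-bandwidth constraint. -/
theorem optimal_bandwidth_allocation {ι : Type*} (S : Finset ι) (hS : S.Nonempty)
    (R : ι → ℝ) (hR : ∀ i ∈ S, 0 < R i) (B : ℝ) (hB : 0 < B) :
    (∀ i ∈ S, 0 < (B / R i) * (∑ i' ∈ S, 1 / R i')⁻¹) ∧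
    (∑ i ∈ S, (B / R i) * (∑ i' ∈ S, 1 / R i')⁻¹ = B) ∧
    (∀ i ∈ S, (B / R i) * (∑ i' ∈ S, 1 / R i')⁻¹ * R i = B * (∑ i' ∈ S, 1 / R i')⁻¹) ∧
    (∀ Balloc : ι → ℝ, (∀ i ∈ S, 0 ≤ Balloc i) → (∑ i ∈ S, Balloc i ≤ B) →
      S.inf' hS (fun i => Balloc i * R i) ≤
        S.inf' hS (fun i => (B / R i) * (∑ i' ∈ S, 1 / R i')⁻¹ * R i)) ∧
    S.inf' hS (fun i => (B / R i) * (∑ i' ∈ S, 1 / R i')⁻¹ * R i) =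
      B * (∑ i' ∈ S, 1 / R i')⁻¹ := by
  have hT : 0 < ∑ i' ∈ S, 1 / R i' :=
    Finset.sum_pos (fun i hi => one_div_pos.mpr (hR i hi)) hS
  have hT' := hT
  set T := ∑ i' ∈ S, 1 / R i' with hTdef
  have h2 : ∀ i ∈ S, (B / R i) * T⁻¹ * R i = B * T⁻¹ := by
    intro i hi
    have := (hR i hi).ne'
    field_simp
  have hinf : S.inf' hS (fun i => (B / R i) * T⁻¹ * R i) = B * T⁻¹ := by
    obtain ⟨j, hj⟩ := hS
    apply le_antisymm
    · exact (Finset.inf'_le _ hj).trans_eq (h2 j hj)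
    · exact Finset.le_inf' _ _ fun i hi => (h2 i hi).ge
  refine ⟨fun i hi => by have := hR i hi; positivity, ?_, h2, ?_, hinf⟩
  · rw [← Finset.sum_mul]
    have : ∑ i ∈ S, B / R i = B * T := by
      rw [hTdef, Finset.mul_sum]
      exact Finset.sum_congr rfl fun i hi => by field_simp
    rw [this, mul_assoc, mul_inv_cancel₀ hT.ne', mul_one]
  · intro Ba hBa hsum
    rw [hinf]
    by_contra h
    push_neg at h
    have key : ∀ i ∈ S, B / R i / T < Ba i := by
      intro i hi
      have hlt : B * T⁻¹ < Ba i * R i :=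
        lt_of_lt_of_le h (Finset.inf'_le _ hi)
      have hRi := hR i hi
      rw [div_div, div_lt_iff₀ (by positivity)]
      calc B = B * T⁻¹ * T := by field_simp
        _ < Ba i * R i * T := by
            exact mul_lt_mul_of_pos_right hlt hT
        _ = Ba i * (R i * T) := by ring
    have : B < ∑ i ∈ S, Ba i := by
      calc B = ∑ i ∈ S, B / R i / T := by
              rw [← Finset.sum_div]
              have : ∑ i ∈ S, B / R i = B * T := by
                rw [hTdef, Finset.mul_sum]
                exact Finset.sum_congr rfl fun i hi => by field_simp
              rw [this, mul_div_assoc, div_self hT.ne', mul_one]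
        _ < ∑ i ∈ S, Ba i := Finset.sum_lt_sum_of_nonempty hS key
    linarith
end
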